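/- arXiv:2602.21167 — 5 statements merged into one kernel-verified Lean document; each statement's English description precedes it below -/
import Mathlib

section
/- Let α > 0, a ∈ ℝ, C > 0 with α²·C ≤ 1, L > 0, and x₂ = a − (1 − √(1 − α²C))/α. If 0 < x₂, then f(x) = exp(-α·x)/((a−x)² + C) attains its maximum on the interval [0, L] at the point min(L, x₂), provided a − (1 + √(1−α²C))/α < 0. -/
theorem max_at_min_L_x2 (α a C L : ℝ) (hα : 0 < α) (hC : 0 < C)
    (hdisc : α ^ 2 * C ≤ 1) (hL : 0 < L)
    (x₂ : ℝ) (hx₂ : x₂ = a - (1 - Real.sqrt (1 - α ^ 2 * C)) / α)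
    (hx₂pos : 0 < x₂)
    (hx₁neg : a - (1 + Real.sqrt (1 - α ^ 2 * C)) / α < 0)
    (f : ℝ → ℝ) (hf : f = fun x => Real.exp (-α * x) / ((a - x) ^ 2 + C)) :
    ∀ x ∈ Set.Icc (0 : ℝ) L, f x ≤ f (min L x₂) := by
  set s := Real.sqrt (1 - α ^ 2 * C) with hs_def
  have hs0 : 0 ≤ s := Real.sqrt_nonneg _
  have hs2 : s ^ 2 = 1 - α ^ 2 * C := Real.sq_sqrt (by linarith)
  have hdpos : ∀ x : ℝ, 0 < (a - x) ^ 2 + C := fun x => by positivity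
  -- derivative
  have hderiv : ∀ x : ℝ, HasDerivAt f
      (Real.exp (-α * x) * (-α * ((a - x) ^ 2 + C) + 2 * (a - x)) / ((a - x) ^ 2 + C) ^ 2) x := by
    intro x
    have h1 : HasDerivAt (fun x : ℝ => Real.exp (-α * x)) (Real.exp (-α * x) * (-α)) x := by
      have h0 : HasDerivAt (fun x : ℝ => -α * x) (-α) x := by
        simpa using (hasDerivAt_id x).const_mul (-α)
      simpa using h0.exp
    have h2 : HasDerivAt (fun x : ℝ => (a - x) ^ 2 + C) (-(2 * (a - x))) x := by
      have h := (((hasDerivAt_id x).const_sub a).pow 2).add_const C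
      exact h.congr_deriv (by simp only [id, Nat.cast_ofNat]; ring)
    have h3 := h1.div h2 (ne_of_gt (hdpos x))
    rw [hf]
    exact h3.congr_deriv (by ring)
  have hdiff : ∀ x : ℝ, DifferentiableAt ℝ f x := fun x => (hderiv x).differentiableAt
  -- sign of derivative
  have hsign_pos : ∀ x : ℝ, 0 ≤ x → x ≤ x₂ →
      0 ≤ Real.exp (-α * x) * (-α * ((a - x) ^ 2 + C) + 2 * (a - x)) / ((a - x) ^ 2 + C) ^ 2 := by
    intro x hx0 hxle
    apply div_nonneg _ (by positivity)
    apply mul_nonneg (Real.exp_nonneg _)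
    have h1 : 1 - s ≤ α * (a - x) := by
      have hax : (1 - s) / α ≤ a - x := by
        rw [hx₂] at hxle; linarith
      calc 1 - s = α * ((1 - s) / α) := by field_simp
        _ ≤ α * (a - x) := mul_le_mul_of_nonneg_left hax hα.le
    have h2 : α * (a - x) ≤ 1 + s := by
      have hax : a - x ≤ (1 + s) / α := by linarith [lt_of_lt_of_le hx₁neg hx0]
      calc α * (a - x) ≤ α * ((1 + s) / α) := mul_le_mul_of_nonneg_left hax hα.le
        _ = 1 + s := by field_simp
    nlinarith [mul_nonneg (by linarith : (0:ℝ) ≤ α * (a - x) - (1 - s))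
      (by linarith : (0:ℝ) ≤ 1 + s - α * (a - x)), hα.le]
  have hsign_neg : ∀ x : ℝ, x₂ ≤ x →
      Real.exp (-α * x) * (-α * ((a - x) ^ 2 + C) + 2 * (a - x)) / ((a - x) ^ 2 + C) ^ 2 ≤ 0 := by
    intro x hxge
    apply div_nonpos_of_nonpos_of_nonneg _ (by positivity)
    apply mul_nonpos_of_nonneg_of_nonpos (Real.exp_nonneg _)
    have h1 : α * (a - x) ≤ 1 - s := by
      have hax : a - x ≤ (1 - s) / α := by
        rw [hx₂] at hxge; linarith
      calc α * (a - x) ≤ α * ((1 - s) / α) := mul_le_mul_of_nonneg_left hax hα.le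
        _ = 1 - s := by field_simp
    nlinarith [sq_nonneg (α * (a - x) - 1 + s), hα.le, hs0]
  -- monotone on [0, x₂]
  have hmono : MonotoneOn f (Set.Icc 0 x₂) := by
    apply monotoneOn_of_deriv_nonneg (convex_Icc 0 x₂)
      (Continuous.continuousOn (by
        rw [hf]
        exact (Real.continuous_exp.comp (continuous_const.mul continuous_id)).div
          (((continuous_const.sub continuous_id).pow 2).add continuous_const)
          (fun x => ne_of_gt (hdpos x))))
      (fun x _ => (hdiff x).differentiableWithinAt)
    intro x hx
    rw [interior_Icc] at hx
    rw [(hderiv x).deriv]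
    exact hsign_pos x hx.1.le hx.2.le
  -- antitone on [x₂, ∞)
  have hanti : AntitoneOn f (Set.Ici x₂) := by
    apply antitoneOn_of_deriv_nonpos (convex_Ici x₂)
      (Continuous.continuousOn (by
        rw [hf]
        exact (Real.continuous_exp.comp (continuous_const.mul continuous_id)).div
          (((continuous_const.sub continuous_id).pow 2).add continuous_const)
          (fun x => ne_of_gt (hdpos x))))
      (fun x _ => (hdiff x).differentiableWithinAt)
    intro x hx
    rw [interior_Ici] at hx
    rw [(hderiv x).deriv]
    exact hsign_neg x hx.le
  intro x hx
  obtain ⟨hx0, hxL⟩ := hx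
  rcases le_total L x₂ with hcase | hcase
  · rw [min_eq_left hcase]
    exact hmono ⟨hx0, by linarith⟩ ⟨hL.le, hcase⟩ hxL
  · rw [min_eq_right hcase]
    rcases le_total x x₂ with h | h
    · exact hmono ⟨hx0, h⟩ ⟨hx₂pos.le, le_refl _⟩ h
    · exact hanti (Set.mem_Ici.mpr le_rfl) (Set.mem_Ici.mpr h) h
end

section
/- Let α > 0, a ∈ ℝ, C > 0, L > 0, and suppose either α²·C > 1, or x₂ := a − (1 − √(1 − α²C))/α ≤ 0. Then f(x) = exp(-α·x)/((a−x)² + C) attains its maximum on [0, L] at x = 0, i.e., f(0) ≥ f(x) for all x ∈ [0, L]. -/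
theorem max_at_zero (α a C L : ℝ) (hα : 0 < α) (hC : 0 < C) (hL : 0 < L)
    (hcase : α ^ 2 * C > 1 ∨ a - (1 - Real.sqrt (1 - α ^ 2 * C)) / α ≤ 0)
    (f : ℝ → ℝ) (hf : f = fun x => Real.exp (-α * x) / ((a - x) ^ 2 + C)) :
    ∀ x ∈ Set.Icc (0 : ℝ) L, f x ≤ f 0 := by
  have hgpos : ∀ x : ℝ, 0 < (a - x) ^ 2 + C := fun x => by positivity
  -- key quadratic inequality
  have key : ∀ x : ℝ, 0 ≤ x → α * (a - x) ^ 2 - 2 * (a - x) + α * C ≥ 0 := by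
    intro x hx
    set t := a - x with ht
    rcases hcase with h1 | h2
    · nlinarith [sq_nonneg (α * t - 1), hα.le, mul_pos hα hC]
    · rcases le_or_gt (α ^ 2 * C) 1 with hle | hgt
      · set s := Real.sqrt (1 - α ^ 2 * C) with hs
        have hs0 : 0 ≤ s := Real.sqrt_nonneg _
        have hs2 : s ^ 2 = 1 - α ^ 2 * C := Real.sq_sqrt (by linarith)
        have hta : t ≤ (1 - s) / α := by
          have := h2
          have h3 : a ≤ (1 - s) / α := by linarith
          linarith
        have ht1 : α * t ≤ 1 - s := by
          calc α * t ≤ α * ((1 - s) / α) := by nlinarith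
            _ = 1 - s := by field_simp
        nlinarith [mul_nonneg (by linarith : (0:ℝ) ≤ 1 - s - α * t)
            (by nlinarith : (0:ℝ) ≤ 1 + s - α * t), sq_nonneg s]
      · nlinarith [sq_nonneg (α * t - 1), hα.le, mul_pos hα hC]
  -- derivative
  have hderiv : ∀ x : ℝ, HasDerivAt f
      ((-(α * (a - x) ^ 2 - 2 * (a - x) + α * C)) * Real.exp (-α * x) / ((a - x) ^ 2 + C) ^ 2) x := by
    intro x
    have h1 : HasDerivAt (fun x : ℝ => Real.exp (-α * x)) (Real.exp (-α * x) * (-α)) x := by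
      have := ((hasDerivAt_id x).const_mul (-α)).exp
      simpa using this
    have h2 : HasDerivAt (fun x : ℝ => (a - x) ^ 2 + C)
        ((2 : ℕ) * (a - x) ^ 1 * (-1)) x := by
      exact (((hasDerivAt_id x).const_sub a).pow 2).add_const C
    have h3 := h1.div h2 (ne_of_gt (hgpos x))
    rw [hf]
    refine h3.congr_deriv ?_
    field_simp
    ring
  have hanti : AntitoneOn f (Set.Icc 0 L) := by
    apply antitoneOn_of_deriv_nonpos (convex_Icc 0 L)
    · exact Continuous.continuousOn (by
        rw [hf]
        exact (Real.continuous_exp.comp (by continuity)).div (by continuity)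
          (fun x => ne_of_gt (hgpos x)))
    · intro x hx
      exact ((hderiv x).differentiableAt).differentiableWithinAt
    · intro x hx
      rw [interior_Icc] at hx
      rw [(hderiv x).deriv]
      have hk := key x hx.1.le
      have he : 0 < Real.exp (-α * x) := Real.exp_pos _
      have : 0 < ((a - x) ^ 2 + C) ^ 2 := by positivity
      apply div_nonpos_of_nonpos_of_nonneg
      · nlinarith
      · positivity
  intro x hx
  exact hanti (Set.left_mem_Icc.mpr hL.le) hx hx.1
end

section
/- Let η, g₁, g₂, σ_R, σ_UE, γ₀ > 0. For P₁, β² > 0 satisfying the SNR constraint P₁·β²·g₁·g₂/(σ_UE² + β²·g₂·σ_R²) ≥ γ₀, the objective J(P₁, β²) = η·P₁ + β²·(P₁·g₁ + σ_R²) satisfies J(P₁, β²) ≥ η·γ₀·σ_R²/g₁ + γ₀·σ_UE²/g₂ + 2·(σ_R·σ_UE/√(g₁·g₂))·√(η·γ₀·(γ₀+1)). -/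
lemma amgm_aux {x y : ℝ} (hx : 0 ≤ x) (hy : 0 ≤ y) :
    2 * Real.sqrt (x * y) ≤ x + y := by
  have h := two_mul_le_add_sq (Real.sqrt x) (Real.sqrt y)
  rw [Real.sq_sqrt hx, Real.sq_sqrt hy] at h
  calc 2 * Real.sqrt (x * y) = 2 * Real.sqrt x * Real.sqrt y := by
        rw [Real.sqrt_mul hx, mul_assoc]
    _ ≤ x + y := h

theorem power_lower_bound (η g₁ g₂ σR σUE γ₀ P₁ b : ℝ)
    (hη : 0 < η) (hg₁ : 0 < g₁) (hg₂ : 0 < g₂)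
    (hσR : 0 < σR) (hσUE : 0 < σUE) (hγ₀ : 0 < γ₀)
    (hP₁ : 0 < P₁) (hb : 0 < b)
    (hSNR : P₁ * b * g₁ * g₂ / (σUE ^ 2 + b * g₂ * σR ^ 2) ≥ γ₀) :
    η * P₁ + b * (P₁ * g₁ + σR ^ 2) ≥
      η * γ₀ * σR ^ 2 / g₁ + γ₀ * σUE ^ 2 / g₂ +
        2 * (σR * σUE / Real.sqrt (g₁ * g₂)) * Real.sqrt (η * γ₀ * (γ₀ + 1)) := by
  have hden : 0 < σUE ^ 2 + b * g₂ * σR ^ 2 := by positivity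
  have hP : P₁ ≥ γ₀ * (σUE ^ 2 + b * g₂ * σR ^ 2) / (b * g₁ * g₂) := by
    rw [ge_iff_le, div_le_iff₀ (by positivity)]
    rw [ge_iff_le, le_div_iff₀ hden] at hSNR
    nlinarith
  set A := η * γ₀ * σUE ^ 2 / (g₁ * g₂)
  set B := (γ₀ + 1) * σR ^ 2
  have hstep : η * P₁ + b * (P₁ * g₁ + σR ^ 2) ≥
      η * γ₀ * σR ^ 2 / g₁ + γ₀ * σUE ^ 2 / g₂ + (A / b + b * B) := by
    have h1 : η * P₁ + b * (P₁ * g₁ + σR ^ 2)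
        ≥ (η + b * g₁) * (γ₀ * (σUE ^ 2 + b * g₂ * σR ^ 2) / (b * g₁ * g₂)) + b * σR ^ 2 := by
      have := mul_le_mul_of_nonneg_left hP (le_of_lt (by positivity : (0:ℝ) < η + b * g₁))
      nlinarith
    have h2 : (η + b * g₁) * (γ₀ * (σUE ^ 2 + b * g₂ * σR ^ 2) / (b * g₁ * g₂)) + b * σR ^ 2
        = η * γ₀ * σR ^ 2 / g₁ + γ₀ * σUE ^ 2 / g₂ + (A / b + b * B) := by
      simp only [A, B]
      field_simp
      ring
    linarith [h1, h2 ▸ h1]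
  have hA : 0 ≤ A := by positivity
  have hB : 0 ≤ B := by positivity
  have hamgm : A / b + b * B ≥ 2 * Real.sqrt ((A / b) * (b * B)) :=
    amgm_aux (by positivity) (by positivity)
  have hprod : (A / b) * (b * B) = A * B := by field_simp
  have hsq : Real.sqrt (A * B) =
      (σR * σUE / Real.sqrt (g₁ * g₂)) * Real.sqrt (η * γ₀ * (γ₀ + 1)) := by
    have : A * B = ((σR * σUE) ^ 2 / (g₁ * g₂)) * (η * γ₀ * (γ₀ + 1)) := by
      simp only [A, B]; field_simp
    rw [this, Real.sqrt_mul (by positivity), Real.sqrt_div (by positivity),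
      Real.sqrt_sq (by positivity)]
  have : 2 * Real.sqrt ((A / b) * (b * B)) =
      2 * (σR * σUE / Real.sqrt (g₁ * g₂)) * Real.sqrt (η * γ₀ * (γ₀ + 1)) := by
    rw [hprod, hsq]; ring
  linarith [hstep, hamgm, this ▸ hamgm]
end

section
/- Let η, g₁, g₂, σ_R, σ_UE, γ₀ > 0, and set P₁* = γ₀·σ_R²/g₁ + (σ_R·σ_UE/√(g₁·g₂))·√(γ₀(γ₀+1)/η) and β²* = (σ_UE/(√(g₁·g₂)·σ_R))·√(γ₀·η/(γ₀+1)). Then (i) P₁*·g₁ > γ₀·σ_R², (ii) the SNR constraint holds with equality: P₁*·β²*·g₁·g₂/(σ_UE² + β²*·g₂·σ_R²) = γ₀, and (iii) η·P₁* + β²*·(P₁*·g₁ + σ_R²) = η·γ₀·σ_R²/g₁ + γ₀·σ_UE²/g₂ + 2·(σ_R·σ_UE/√(g₁·g₂))·√(η·γ₀·(γ₀+1)). -/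
theorem optimal_point (η g₁ g₂ σR σUE γ₀ : ℝ)
    (hη : 0 < η) (hg₁ : 0 < g₁) (hg₂ : 0 < g₂)
    (hσR : 0 < σR) (hσUE : 0 < σUE) (hγ₀ : 0 < γ₀) :
    let P₁ := γ₀ * σR ^ 2 / g₁ +
      (σR * σUE / Real.sqrt (g₁ * g₂)) * Real.sqrt (γ₀ * (γ₀ + 1) / η)
    let b := (σUE / (Real.sqrt (g₁ * g₂) * σR)) * Real.sqrt (γ₀ * η / (γ₀ + 1))
    P₁ * g₁ > γ₀ * σR ^ 2 ∧
    P₁ * b * g₁ * g₂ / (σUE ^ 2 + b * g₂ * σR ^ 2) = γ₀ ∧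
    η * P₁ + b * (P₁ * g₁ + σR ^ 2) =
      η * γ₀ * σR ^ 2 / g₁ + γ₀ * σUE ^ 2 / g₂ +
        2 * (σR * σUE / Real.sqrt (g₁ * g₂)) * Real.sqrt (η * γ₀ * (γ₀ + 1)) := by
  intro P₁ b
  set S := Real.sqrt (g₁ * g₂) with hSdef
  set A := Real.sqrt (γ₀ * (γ₀ + 1) / η) with hAdef
  set B := Real.sqrt (γ₀ * η / (γ₀ + 1)) with hBdef
  set C := Real.sqrt (η * γ₀ * (γ₀ + 1)) with hCdef
  have hγ1 : (0:ℝ) < γ₀ + 1 := by linarith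
  have hS : S ^ 2 = g₁ * g₂ := Real.sq_sqrt (by positivity)
  have hSpos : 0 < S := Real.sqrt_pos.mpr (by positivity)
  have hApos : 0 < A := Real.sqrt_pos.mpr (by positivity)
  have hBpos : 0 < B := Real.sqrt_pos.mpr (by positivity)
  have hA2 : A ^ 2 = γ₀ * (γ₀ + 1) / η := Real.sq_sqrt (by positivity)
  have hB2 : B ^ 2 = γ₀ * η / (γ₀ + 1) := Real.sq_sqrt (by positivity)
  have hAB : A * B = γ₀ := by
    have h1 : (A * B) ^ 2 = γ₀ ^ 2 := by
      rw [mul_pow, hA2, hB2]; field_simp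
    have h2 : 0 ≤ A * B := by positivity
    nlinarith
  have hC : C = η * A := by
    have h1 : (η * A) ^ 2 = η * γ₀ * (γ₀ + 1) := by
      rw [mul_pow, hA2]; field_simp
    rw [hCdef, ← h1, Real.sqrt_sq (by positivity)]
  have hCB : C = (γ₀ + 1) * B := by
    have h1 : ((γ₀ + 1) * B) ^ 2 = η * γ₀ * (γ₀ + 1) := by
      rw [mul_pow, hB2]; field_simp
    rw [hCdef, ← h1, Real.sqrt_sq (by positivity)]
  refine ⟨?_, ?_, ?_⟩
  · show (γ₀ * σR ^ 2 / g₁ + σR * σUE / S * A) * g₁ > γ₀ * σR ^ 2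
    have h1 : (γ₀ * σR ^ 2 / g₁ + σR * σUE / S * A) * g₁
        = γ₀ * σR ^ 2 + σR * σUE / S * A * g₁ := by field_simp
    have h2 : 0 < σR * σUE / S * A * g₁ := by positivity
    linarith
  · show P₁ * b * g₁ * g₂ / (σUE ^ 2 + b * g₂ * σR ^ 2) = γ₀
    have hbpos : 0 < b := by
      show 0 < σUE / (S * σR) * B; positivity
    have hden : σUE ^ 2 + b * g₂ * σR ^ 2 ≠ 0 := by positivity
    rw [div_eq_iff hden]
    show (γ₀ * σR ^ 2 / g₁ + σR * σUE / S * A) * (σUE / (S * σR) * B) * g₁ * g₂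
        = γ₀ * (σUE ^ 2 + σUE / (S * σR) * B * g₂ * σR ^ 2)
    field_simp
    linear_combination (g₁*σUE*g₂) * hAB - (γ₀*σUE) * hS
  · show η * (γ₀ * σR ^ 2 / g₁ + σR * σUE / S * A) +
        σUE / (S * σR) * B * ((γ₀ * σR ^ 2 / g₁ + σR * σUE / S * A) * g₁ + σR ^ 2)
        = η * γ₀ * σR ^ 2 / g₁ + γ₀ * σUE ^ 2 / g₂ + 2 * (σR * σUE / S) * C
    rw [hC]
    have hB' : B = η * A / (γ₀ + 1) := by
      rw [← hC] at *; rw [hCB]; field_simp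
    rw [hB']
    have hA2' : η * A ^ 2 = γ₀ * (γ₀ + 1) := by rw [hA2]; field_simp
    field_simp
    linear_combination (g₂*g₁^2*σUE^2) * hA2' - (γ₀*(γ₀+1)*g₁*σUE^2) * hS
end

section
/- Let α > 0, a ∈ ℝ, C > 0, L > 0 with α²C ≤ 1, x₁ = a − (1+√(1−α²C))/α and x₂ = a − (1−√(1−α²C))/α, and suppose 0 ≤ x₁. Then for f(x) = exp(-α·x)/((a−x)² + C), the maximum of f over [0, L] equals max(f(0), f(min(L, x₂))). -/
theorem max_two_candidates (α a C L : ℝ) (hα : 0 < α) (hC : 0 < C) (hL : 0 < L)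
    (hdisc : α ^ 2 * C ≤ 1)
    (x₁ x₂ : ℝ)
    (hx₁ : x₁ = a - (1 + Real.sqrt (1 - α ^ 2 * C)) / α)
    (hx₂ : x₂ = a - (1 - Real.sqrt (1 - α ^ 2 * C)) / α)
    (hx₁pos : 0 ≤ x₁)
    (f : ℝ → ℝ) (hf : f = fun x => Real.exp (-α * x) / ((a - x) ^ 2 + C)) :
    IsGreatest (f '' Set.Icc (0 : ℝ) L) (max (f 0) (f (min L x₂))) := by
  have hdisc' : (0:ℝ) ≤ 1 - α ^ 2 * C := by linarith
  set s := Real.sqrt (1 - α ^ 2 * C) with hs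
  have hs2 : s ^ 2 = 1 - α ^ 2 * C := Real.sq_sqrt hdisc'
  have hs0 : 0 ≤ s := Real.sqrt_nonneg _
  have hx12 : x₁ ≤ x₂ := by
    have h : x₂ - x₁ = 2 * s / α := by rw [hx₁, hx₂]; ring
    nlinarith [div_nonneg (by linarith : (0:ℝ) ≤ 2 * s) hα.le]
  -- key algebraic identity for the derivative numerator
  have hkey : ∀ x : ℝ, -α * ((a - x) ^ 2 + C) + 2 * (a - x)
      = -α * (x - x₁) * (x - x₂) := by
    intro x
    rw [hx₁, hx₂]
    field_simp
    nlinarith [hs2]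
  have hden : ∀ x : ℝ, (0:ℝ) < (a - x) ^ 2 + C := fun x => by positivity
  have hderiv : ∀ x : ℝ, HasDerivAt f
      (Real.exp (-α * x) * (-α * (x - x₁) * (x - x₂)) / ((a - x) ^ 2 + C) ^ 2) x := by
    intro x
    have h1 : HasDerivAt (fun x : ℝ => Real.exp (-α * x)) (Real.exp (-α * x) * (-α)) x := by
      simpa using ((hasDerivAt_id x).const_mul (-α)).exp
    have h2 : HasDerivAt (fun x : ℝ => (a - x) ^ 2 + C)
        ((2 : ℕ) * (a - x) ^ 1 * (0 - 1)) x := by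
      exact (((hasDerivAt_const x a).sub (hasDerivAt_id x)).pow 2).add_const C
    have h3 := h1.div h2 (hden x).ne'
    rw [hf]
    refine h3.congr_deriv ?_
    rw [← hkey x]
    field_simp
    ring
  have hcont : Continuous f := by
    rw [hf]
    exact Continuous.div (by continuity) (by continuity) (fun x => (hden x).ne')
  have hdiff : Differentiable ℝ f := fun x => (hderiv x).differentiableAt
  -- monotonicity on the three pieces
  have hant1 : AntitoneOn f (Set.Icc 0 x₁) := by
    apply antitoneOn_of_deriv_nonpos (convex_Icc _ _) hcont.continuousOn
      hdiff.differentiableOn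
    intro x hx
    rw [interior_Icc, Set.mem_Ioo] at hx
    rw [(hderiv x).deriv]
    apply div_nonpos_of_nonpos_of_nonneg _ (by positivity)
    have hP : 0 < (x - x₁) * (x - x₂) :=
      mul_pos_of_neg_of_neg (by linarith [hx.2]) (by linarith [hx.2, hx12])
    nlinarith [mul_pos (Real.exp_pos (-α * x)) (mul_pos hα hP)]
  have hmono : MonotoneOn f (Set.Icc x₁ x₂) := by
    apply monotoneOn_of_deriv_nonneg (convex_Icc _ _) hcont.continuousOn
      hdiff.differentiableOn
    intro x hx
    rw [interior_Icc, Set.mem_Ioo] at hx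
    rw [(hderiv x).deriv]
    apply div_nonneg _ (by positivity)
    have hP : (x - x₁) * (x - x₂) < 0 :=
      mul_neg_of_pos_of_neg (by linarith [hx.1]) (by linarith [hx.2])
    nlinarith [mul_pos (Real.exp_pos (-α * x)) (mul_pos hα (neg_pos.2 hP))]
  have hant2 : AntitoneOn f (Set.Icc x₂ L) := by
    apply antitoneOn_of_deriv_nonpos (convex_Icc _ _) hcont.continuousOn
      hdiff.differentiableOn
    intro x hx
    rw [interior_Icc, Set.mem_Ioo] at hx
    rw [(hderiv x).deriv]
    apply div_nonpos_of_nonpos_of_nonneg _ (by positivity)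
    have hP : 0 < (x - x₁) * (x - x₂) :=
      mul_pos (by linarith [hx.1, hx12]) (by linarith [hx.1])
    nlinarith [mul_pos (Real.exp_pos (-α * x)) (mul_pos hα hP)]
  set m := min L x₂ with hm
  have hm0 : 0 ≤ m := le_min hL.le (hx₁pos.trans hx12)
  have hmL : m ≤ L := min_le_left _ _
  constructor
  · rcases le_total (f 0) (f m) with h | h
    · rw [max_eq_right h]
      exact ⟨m, ⟨hm0, hmL⟩, rfl⟩
    · rw [max_eq_left h]
      exact ⟨0, ⟨le_refl 0, hL.le⟩, rfl⟩
  · rintro z ⟨y, ⟨hy0, hyL⟩, rfl⟩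
    rcases le_total y x₁ with h1 | h1
    · exact le_max_of_le_left (hant1 ⟨le_refl 0, hx₁pos⟩ ⟨hy0, h1⟩ hy0)
    · rcases le_total y x₂ with h2 | h2
      · -- x₁ ≤ y ≤ min L x₂
        have hym : y ≤ m := le_min hyL h2
        have hx₁m : x₁ ≤ m := le_min (h1.trans hyL) hx12
        exact le_max_of_le_right (hmono ⟨h1, h2⟩ ⟨hx₁m, min_le_right _ _⟩ hym)
      · -- x₂ ≤ y ≤ L, so m = x₂
        have hmx : m = x₂ := min_eq_right (h2.trans hyL)
        rw [hmx]
        exact le_max_of_le_right (hant2 ⟨le_refl x₂, h2.trans hyL⟩ ⟨h2, hyL⟩ h2)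
end
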